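/- Let U be the complex 2×2 matrix with U₀₀ = U₁₁ = i/√2 and U₀₁ = U₁₀ = 1/√2, and for a function f : {0,1} → {0,1} let D_f be the diagonal 2×2 matrix with entries (−1)^{f(0)} and (−1)^{f(1)}. Then the squared modulus of the (0,0) entry of the product U·D_f·U equals 0 if f(0) = f(1) and equals 1 if f(0) ≠ f(1). Thus the circuit consisting of a √NOT gate, the phase gate D_f, and another √NOT gate determines with certainty, from a single application of D_f, whether f is constant or balanced. -/

import Mathlib

lemma deutsch_entry (f : Fin 2 → Fin 2) :
    ((!![Complex.I / Real.sqrt 2, 1 / Real.sqrt 2;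
         1 / Real.sqrt 2, Complex.I / Real.sqrt 2] *
      !![((-1:ℂ)) ^ (f 0 : ℕ), 0; 0, (-1) ^ (f 1 : ℕ)] *
      !![Complex.I / Real.sqrt 2, 1 / Real.sqrt 2;
         1 / Real.sqrt 2, Complex.I / Real.sqrt 2]) 0 0)
    = ((-1:ℂ) ^ (f 1 : ℕ) - (-1) ^ (f 0 : ℕ)) / 2 := by
  have h2 : ((Real.sqrt 2 : ℂ)) ^ 2 = 2 := by
    rw [← Complex.ofReal_pow, Real.sq_sqrt (by norm_num)]
    norm_num
  have hne : (Real.sqrt 2 : ℂ) ≠ 0 := by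
    intro h
    rw [h] at h2
    norm_num at h2
  simp [Matrix.mul_apply, Fin.sum_univ_two]
  field_simp
  ring_nf
  rw [show ((Real.sqrt 2 : ℂ))^2 = 2 from h2]
  ring_nf
  rw [Complex.I_sq]
  ring

/-- The Deutsch circuit U·D_f·U decides constant vs balanced with certainty:
the squared modulus of its (0,0) entry is 0 if f is constant and 1 if f is balanced. -/
theorem deutsch_circuit (f : Fin 2 → Fin 2) :
    let U : Matrix (Fin 2) (Fin 2) ℂ :=
      !![Complex.I / Real.sqrt 2, 1 / Real.sqrt 2;
         1 / Real.sqrt 2, Complex.I / Real.sqrt 2]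
    let D : Matrix (Fin 2) (Fin 2) ℂ :=
      !![(-1) ^ (f 0 : ℕ), 0; 0, (-1) ^ (f 1 : ℕ)]
    (f 0 = f 1 → ‖(U * D * U) 0 0‖ ^ 2 = 0) ∧
    (f 0 ≠ f 1 → ‖(U * D * U) 0 0‖ ^ 2 = 1) := by
  intro U D
  rw [show (U * D * U) 0 0 = ((-1:ℂ) ^ (f 1 : ℕ) - (-1) ^ (f 0 : ℕ)) / 2 from
    deutsch_entry f]
  constructor
  · intro h
    rw [h]
    simp
  · intro h
    have h0 : f 0 = 0 ∨ f 0 = 1 := by omega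
    have h1 : f 1 = 0 ∨ f 1 = 1 := by omega
    rcases h0 with h0 | h0 <;> rcases h1 with h1 | h1 <;>
      simp [h0, h1] at h ⊢ <;> norm_num
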